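/- arXiv:quant-ph/0502165 — 4 statements merged into one kernel-verified Lean document; each statement's English description precedes it below -/
import Mathlib

section
/- Let ρ0 and ρ1 be two n×n complex density matrices with a priori probabilities η0, η1 ≥ 0, η0 + η1 = 1, and let (E0, E1, E?) be a USD POVM for (ρ0, ρ1). Then the partial failure probabilities Q0 = η0·Tr(E? ρ0) and Q1 = η1·Tr(E? ρ1) satisfy Q0·Q1 ≥ η0·η1·F², where F = Tr(√(√ρ0 · ρ1 · √ρ0)) is the fidelity of ρ0 and ρ1. -/
open Matrix
open scoped ComplexOrder

/-- The positive semidefinite square root of a matrix (zero if the matrix is not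
positive semidefinite). -/
noncomputable def msqrt {n : ℕ} (A : Matrix (Fin n) (Fin n) ℂ) : Matrix (Fin n) (Fin n) ℂ :=
  open scoped Classical in
  if h : A.PosSemidef then
    (h.1.eigenvectorUnitary : Matrix (Fin n) (Fin n) ℂ) *
      diagonal ((↑) ∘ Real.sqrt ∘ h.1.eigenvalues) *
      (star h.1.eigenvectorUnitary : Matrix (Fin n) (Fin n) ℂ) else 0

/-!
The USD conditions force `√ρ1 * E0 = 0 = E1 * √ρ0`, hence
`√ρ1 * √ρ0 = √ρ1 * E? * √ρ0 = Y * Zᴴ` with `Y = √ρ1 * √E?` and `Z = √ρ0 * √E?`.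
The fidelity `Tr √((√ρ1 * √ρ0)ᴴ * (√ρ1 * √ρ0))` is the trace norm of `A = √ρ1 * √ρ0`, which is
attained as `Tr (Wᴴ * A)` for a contraction `W` (the partial isometry in the polar decomposition
of `A`). Cauchy–Schwarz for the Hilbert–Schmidt inner product then gives
`F ^ 2 ≤ Tr (Zᴴ * Z) * Tr (Yᴴ * Y) = Tr (E? * ρ0) * Tr (E? * ρ1)`.
-/

open scoped MatrixOrder

lemma msqrt_eq_sqrt {n : ℕ} {A : Matrix (Fin n) (Fin n) ℂ} (hA : A.PosSemidef) :
    msqrt A = CFC.sqrt A := by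
  rw [CFC.sqrt_eq_real_sqrt A hA.nonneg, cfcₙ_eq_cfc, hA.1.cfc_eq, msqrt, dif_pos hA]
  rfl

namespace Matrix

variable {𝕜 m n : Type*} [RCLike 𝕜] [Fintype m] [Fintype n]

lemma norm_trace_conjTranspose_mul_sq_le (X Y : Matrix m n 𝕜) :
    ‖(Xᴴ * Y).trace‖ ^ 2 ≤ RCLike.re (Xᴴ * X).trace * RCLike.re (Yᴴ * Y).trace := by
  have trace_eq_inner (X Y : Matrix m n 𝕜) : (Xᴴ * Y).trace =
      inner 𝕜 (WithLp.toLp 2 X.vec : EuclideanSpace 𝕜 (n × m)) (WithLp.toLp 2 Y.vec) := by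
    rw [EuclideanSpace.inner_toLp_toLp, ← star_vec_dotProduct_vec, dotProduct_comm]
  simp only [trace_eq_inner, inner_self_eq_norm_sq, ← mul_pow]
  exact pow_le_pow_left₀ (norm_nonneg _) (norm_inner_le_norm _ _) 2

variable [DecidableEq n]

lemma trace_conjTranspose_mul_self_sqrt_mul_sqrt {A B : Matrix n n 𝕜} (hA : A.PosSemidef)
    (hB : B.PosSemidef) :
    ((CFC.sqrt A * CFC.sqrt B)ᴴ * (CFC.sqrt A * CFC.sqrt B)).trace = (B * A).trace := by
  have hsA : (CFC.sqrt A)ᴴ = CFC.sqrt A := (CFC.sqrt_nonneg A).posSemidef.isHermitian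
  have hsB : (CFC.sqrt B)ᴴ = CFC.sqrt B := (CFC.sqrt_nonneg B).posSemidef.isHermitian
  rw [conjTranspose_mul, hsA, hsB, mul_assoc, ← mul_assoc (CFC.sqrt A),
    CFC.sqrt_mul_sqrt_self A hA.nonneg, trace_mul_comm, mul_assoc,
    CFC.sqrt_mul_sqrt_self B hB.nonneg, trace_mul_comm]

lemma PosSemidef.sqrt_mul_eq_zero_of_trace_mul_eq_zero {A B : Matrix n n 𝕜}
    (hA : A.PosSemidef) (hB : B.PosSemidef) (h : (A * B).trace = 0) : CFC.sqrt B * A = 0 := by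
  have h0 : CFC.sqrt B * CFC.sqrt A = 0 := by
    rw [← trace_conjTranspose_mul_self_eq_zero_iff,
      trace_conjTranspose_mul_self_sqrt_mul_sqrt hB hA, h]
  rw [← CFC.sqrt_mul_sqrt_self A hA.nonneg, ← mul_assoc, h0, zero_mul]

lemma exists_conjTranspose_mul_self_le_one_trace_eq (A : Matrix m n 𝕜) :
    ∃ W : Matrix m n 𝕜, Wᴴ * W ≤ 1 ∧ (Wᴴ * A).trace = (CFC.sqrt (Aᴴ * A)).trace := by
  set M := Aᴴ * A
  have hM : 0 ≤ M := (posSemidef_conjTranspose_mul_self A).nonneg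
  have hcont (f : ℝ → ℝ) : ContinuousOn f (spectrum ℝ M) :=
    M.finite_real_spectrum.continuousOn f
  -- `P` inverts `√M` on its support and vanishes on its kernel, because `(√0)⁻¹ = 0`.
  set P := cfc (fun x : ℝ => (√x)⁻¹) M
  have hP : Pᴴ = P := (cfc_predicate _ M : IsSelfAdjoint P).star_eq
  refine ⟨A * P, ?_, ?_⟩
  · have hWW : (A * P)ᴴ * (A * P) = cfc (fun x : ℝ => (√x)⁻¹ * x * (√x)⁻¹) M := by
      rw [cfc_mul _ _ M (hcont _) (hcont _), cfc_mul _ _ M (hcont _) (hcont _), cfc_id' ℝ M,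
        conjTranspose_mul, hP]
      simp only [M, P, Matrix.mul_assoc]
    rw [hWW]
    refine cfc_le_one _ M fun x hx => ?_
    rw [show (√x)⁻¹ * x * (√x)⁻¹ = x / √x ^ 2 by ring,
      Real.sq_sqrt (spectrum_nonneg_of_nonneg hM hx)]
    exact div_self_le_one x
  · have hWA : (A * P)ᴴ * A = cfc (fun x : ℝ => (√x)⁻¹ * x) M := by
      rw [cfc_mul _ _ M (hcont _) (hcont _), cfc_id' ℝ M, conjTranspose_mul, hP]
      simp only [M, P, Matrix.mul_assoc]
    rw [hWA, CFC.sqrt_eq_real_sqrt M hM, cfcₙ_eq_cfc]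
    congr 2
    funext x
    rw [inv_mul_eq_div, Real.div_sqrt]

lemma re_trace_sqrt_sq_le_of_eq_mul_conjTranspose {l : Type*} [Fintype l]
    {A : Matrix m n 𝕜} {Y : Matrix m l 𝕜} {Z : Matrix n l 𝕜} (hA : A = Y * Zᴴ) :
    RCLike.re (CFC.sqrt (Aᴴ * A)).trace ^ 2 ≤
      RCLike.re (Zᴴ * Z).trace * RCLike.re (Yᴴ * Y).trace := by
  obtain ⟨W, hW, htrace⟩ := exists_conjTranspose_mul_self_le_one_trace_eq A
  have hWZ : RCLike.re ((W * Z)ᴴ * (W * Z)).trace ≤ RCLike.re (Zᴴ * Z).trace := by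
    have hdiff := (le_iff.mp hW).conjTranspose_mul_mul_same Z
    rw [Matrix.mul_sub, Matrix.sub_mul, Matrix.mul_one] at hdiff
    have htr := hdiff.trace_nonneg
    rw [trace_sub, sub_nonneg] at htr
    simpa only [conjTranspose_mul, Matrix.mul_assoc] using RCLike.re_le_re htr
  have htrace' : (CFC.sqrt (Aᴴ * A)).trace = ((W * Z)ᴴ * Y).trace := by
    rw [← htrace, hA, conjTranspose_mul, ← Matrix.mul_assoc, trace_mul_comm, Matrix.mul_assoc]
  have hY : 0 ≤ RCLike.re (Yᴴ * Y).trace :=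
    (RCLike.nonneg_iff.mp (posSemidef_conjTranspose_mul_self Y).trace_nonneg).1
  calc RCLike.re (CFC.sqrt (Aᴴ * A)).trace ^ 2
      ≤ ‖((W * Z)ᴴ * Y).trace‖ ^ 2 := by
        rw [htrace']
        exact sq_le_sq' (neg_le_of_abs_le (RCLike.abs_re_le_norm _)) (RCLike.re_le_norm _)
    _ ≤ RCLike.re ((W * Z)ᴴ * (W * Z)).trace * RCLike.re (Yᴴ * Y).trace :=
        norm_trace_conjTranspose_mul_sq_le _ _
    _ ≤ RCLike.re (Zᴴ * Z).trace * RCLike.re (Yᴴ * Y).trace :=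
        mul_le_mul_of_nonneg_right hWZ hY

end Matrix

lemma sqrt_mul_sqrt_eq_mul_conjTranspose_of_usd {𝕜 n : Type*} [RCLike 𝕜] [Fintype n]
    [DecidableEq n] {ρ0 ρ1 E0 E1 Eq : Matrix n n 𝕜} (hρ0 : ρ0.PosSemidef) (hρ1 : ρ1.PosSemidef)
    (hE0 : E0.PosSemidef) (hE1 : E1.PosSemidef) (hEq : Eq.PosSemidef)
    (hsum : E0 + E1 + Eq = 1) (husd0 : (E0 * ρ1).trace = 0) (husd1 : (E1 * ρ0).trace = 0) :
    CFC.sqrt ρ1 * CFC.sqrt ρ0 = (CFC.sqrt ρ1 * CFC.sqrt Eq) * (CFC.sqrt ρ0 * CFC.sqrt Eq)ᴴ := by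
  have hs0 : (CFC.sqrt ρ0)ᴴ = CFC.sqrt ρ0 := (CFC.sqrt_nonneg ρ0).posSemidef.isHermitian
  have hf : (CFC.sqrt Eq)ᴴ = CFC.sqrt Eq := (CFC.sqrt_nonneg Eq).posSemidef.isHermitian
  have hs1E0 : CFC.sqrt ρ1 * E0 = 0 := hE0.sqrt_mul_eq_zero_of_trace_mul_eq_zero hρ1 husd0
  have hE1s0 : E1 * CFC.sqrt ρ0 = 0 := by
    have := congrArg conjTranspose (hE1.sqrt_mul_eq_zero_of_trace_mul_eq_zero hρ0 husd1)
    rwa [conjTranspose_mul, conjTranspose_zero, hE1.isHermitian.eq, hs0] at this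
  have hEq' : Eq = 1 - E0 - E1 := by rw [← hsum]; abel
  calc CFC.sqrt ρ1 * CFC.sqrt ρ0 = CFC.sqrt ρ1 * Eq * CFC.sqrt ρ0 := by
        rw [hEq', mul_sub, mul_sub, sub_mul, sub_mul, hs1E0, mul_assoc _ E1, hE1s0]
        simp
    _ = (CFC.sqrt ρ1 * CFC.sqrt Eq) * (CFC.sqrt ρ0 * CFC.sqrt Eq)ᴴ := by
        rw [conjTranspose_mul, hs0, hf, mul_assoc (CFC.sqrt ρ1) (CFC.sqrt Eq),
          ← mul_assoc (CFC.sqrt Eq), CFC.sqrt_mul_sqrt_self Eq hEq.nonneg, mul_assoc]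

theorem product_failure_bound_general {n : ℕ}
    (ρ0 ρ1 E0 E1 Eq : Matrix (Fin n) (Fin n) ℂ)
    (hρ0 : ρ0.PosSemidef)
    (hρ1 : ρ1.PosSemidef)
    (η0 η1 : ℝ) (hη0 : 0 ≤ η0) (hη1 : 0 ≤ η1)
    (hE0 : E0.PosSemidef) (hE1 : E1.PosSemidef) (hEq : Eq.PosSemidef)
    (hsum : E0 + E1 + Eq = 1)
    (husd0 : (E0 * ρ1).trace = 0) (husd1 : (E1 * ρ0).trace = 0) :
    η0 * η1 * ((msqrt (msqrt ρ0 * ρ1 * msqrt ρ0)).trace.re) ^ 2 ≤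
      (η0 * (Eq * ρ0).trace.re) * (η1 * (Eq * ρ1).trace.re) := by
  set s0 := CFC.sqrt ρ0
  set s1 := CFC.sqrt ρ1
  have hM : s0 * ρ1 * s0 = (s1 * s0)ᴴ * (s1 * s0) := by
    rw [conjTranspose_mul, (CFC.sqrt_nonneg ρ0).posSemidef.isHermitian.eq,
      (CFC.sqrt_nonneg ρ1).posSemidef.isHermitian.eq, mul_assoc s0 s1, ← mul_assoc s1 s1,
      CFC.sqrt_mul_sqrt_self ρ1 hρ1.nonneg, mul_assoc]
  have hF := re_trace_sqrt_sq_le_of_eq_mul_conjTranspose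
    (sqrt_mul_sqrt_eq_mul_conjTranspose_of_usd hρ0 hρ1 hE0 hE1 hEq hsum husd0 husd1)
  rw [trace_conjTranspose_mul_self_sqrt_mul_sqrt hρ0 hEq,
    trace_conjTranspose_mul_self_sqrt_mul_sqrt hρ1 hEq] at hF
  rw [msqrt_eq_sqrt hρ0, hM, msqrt_eq_sqrt (posSemidef_conjTranspose_mul_self _)]
  calc _ ≤ η0 * η1 * ((Eq * ρ0).trace.re * (Eq * ρ1).trace.re) :=
        mul_le_mul_of_nonneg_left hF (mul_nonneg hη0 hη1)
    _ = (η0 * (Eq * ρ0).trace.re) * (η1 * (Eq * ρ1).trace.re) := by ring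

/-- **Theorem 1 (bound part).** For two density matrices `ρ0, ρ1` with a priori
probabilities `η0, η1` and any USD POVM `(E0, E1, E?)`, the partial failure
probabilities satisfy `Q0 * Q1 ≥ η0 * η1 * F ^ 2`, where `F` is the fidelity. -/
theorem product_failure_bound {n : ℕ}
    (ρ0 ρ1 E0 E1 Eq : Matrix (Fin n) (Fin n) ℂ)
    (hρ0 : ρ0.PosSemidef) (hρ0tr : ρ0.trace = 1)
    (hρ1 : ρ1.PosSemidef) (hρ1tr : ρ1.trace = 1)
    (η0 η1 : ℝ) (hη0 : 0 ≤ η0) (hη1 : 0 ≤ η1) (hη : η0 + η1 = 1)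
    (hE0 : E0.PosSemidef) (hE1 : E1.PosSemidef) (hEq : Eq.PosSemidef)
    (hsum : E0 + E1 + Eq = 1)
    (husd0 : (E0 * ρ1).trace = 0) (husd1 : (E1 * ρ0).trace = 0) :
    η0 * η1 * ((msqrt (msqrt ρ0 * ρ1 * msqrt ρ0)).trace.re) ^ 2 ≤
      (η0 * (Eq * ρ0).trace.re) * (η1 * (Eq * ρ1).trace.re) :=
  product_failure_bound_general ρ0 ρ1 E0 E1 Eq hρ0 hρ1 η0 η1 hη0 hη1 hE0 hE1 hEq hsum husd0 husd1
end

section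
/- Let ρ0 and ρ1 be n×n complex density matrices with a priori probabilities η0, η1 > 0, η0 + η1 = 1, let F = Tr(√(√ρ0 · ρ1 · √ρ0)), and let P0, P1 be the orthogonal projections onto the ranges of ρ0, ρ1. If √η0 · Tr(P1 ρ0) ≤ √η1 · F and √η1 · Tr(P0 ρ1) ≤ √η0 · F (second regime), then for any USD POVM (E0, E1, E?) the failure probability Q = η0·Tr(E? ρ0) + η1·Tr(E? ρ1) satisfies Q ≥ 2·√(η0·η1)·F. -/
/-!
Unambiguity forces `E₁ √ρ₀ = 0` and `E₀ √ρ₁ = 0`, so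
`√ρ₁ √ρ₀ = √ρ₁ (E₀ + E₁ + E?) √ρ₀ = (√E? √ρ₁)ᴴ (√E? √ρ₀)`.
The fidelity `F` is the trace norm of `√ρ₁ √ρ₀`. Writing it as `Tr (Kᴴ (√ρ₁ √ρ₀))` with `K` the
partial isometry of the polar decomposition, Cauchy–Schwarz for the Hilbert–Schmidt inner product
gives `F ≤ √Tr (E? ρ₁) · √Tr (E? ρ₀)`, and AM–GM turns this into the bound on `Q`.
-/

open Matrix
open scoped ComplexOrder

/-- `P` is the orthogonal projection onto the range (support) of `A`. -/
def IsRangeProj {n : ℕ} (A P : Matrix (Fin n) (Fin n) ℂ) : Prop :=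
  P.IsHermitian ∧ P * P = P ∧
    LinearMap.range P.mulVecLin = LinearMap.range A.mulVecLin

namespace Matrix.IsHermitian

variable {ι 𝕜 : Type*} [Fintype ι] [DecidableEq ι] [RCLike 𝕜] {A : Matrix ι ι 𝕜}
  (hA : A.IsHermitian)
include hA

lemma cfc_mul_cfc (f g : ℝ → ℝ) : hA.cfc f * hA.cfc g = hA.cfc (fun x => f x * g x) := by
  rw [IsHermitian.cfc, IsHermitian.cfc, IsHermitian.cfc, ← map_mul, diagonal_mul_diagonal]
  simp only [Function.comp_def, RCLike.ofReal_mul]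

lemma cfc_id : hA.cfc id = A := by
  conv_rhs => rw [hA.spectral_theorem]
  rfl

lemma conjTranspose_cfc (f : ℝ → ℝ) : (hA.cfc f)ᴴ = hA.cfc f := by
  rw [← star_eq_conjTranspose, IsHermitian.cfc, ← map_star, star_eq_conjTranspose,
    diagonal_conjTranspose]
  congr 2
  funext i
  simp

lemma cfc_congr {f g : ℝ → ℝ} (h : ∀ i, f (hA.eigenvalues i) = g (hA.eigenvalues i)) :
    hA.cfc f = hA.cfc g := by
  simp only [IsHermitian.cfc, Function.comp_def, h]

end Matrix.IsHermitian

namespace Matrix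

variable {m n 𝕜 : Type*} [Fintype m] [Fintype n] [RCLike 𝕜]

lemma re_trace_conjTranspose_mul_le (B C : Matrix m n 𝕜) :
    RCLike.re (Bᴴ * C).trace ≤
      √(RCLike.re (Bᴴ * B).trace) * √(RCLike.re (Cᴴ * C).trace) := by
  let f : Matrix m n 𝕜 → EuclideanSpace 𝕜 (m × n) := fun A => WithLp.toLp 2 fun p => A p.1 p.2
  have hinner : ∀ A₁ A₂ : Matrix m n 𝕜, inner 𝕜 (f A₁) (f A₂) = (A₁ᴴ * A₂).trace := by
    intro A₁ A₂
    simp only [PiLp.inner_apply, RCLike.inner_apply, trace, diag, mul_apply,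
      conjTranspose_apply, f, Fintype.sum_prod_type]
    rw [Finset.sum_comm]
    exact Finset.sum_congr rfl fun _ _ => Finset.sum_congr rfl fun _ _ => mul_comm _ _
  calc RCLike.re (Bᴴ * C).trace = RCLike.re (inner 𝕜 (f B) (f C)) := by rw [hinner]
    _ ≤ ‖inner 𝕜 (f B) (f C)‖ := RCLike.re_le_norm _
    _ ≤ ‖f B‖ * ‖f C‖ := norm_inner_le_norm _ _
    _ = _ := by rw [norm_eq_sqrt_re_inner (𝕜 := 𝕜), norm_eq_sqrt_re_inner (𝕜 := 𝕜), hinner, hinner]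

lemma re_trace_mul_mul_conjTranspose_le [DecidableEq n] (B : Matrix m n 𝕜)
    {P : Matrix n n 𝕜} (hP : IsStarProjection P) :
    RCLike.re (B * P * Bᴴ).trace ≤ RCLike.re (B * Bᴴ).trace := by
  have hQ := hP.one_sub
  have h : B * Bᴴ - B * P * Bᴴ = (B * (1 - P)) * (B * (1 - P))ᴴ := by
    rw [conjTranspose_mul, ← star_eq_conjTranspose (1 - P), hQ.isSelfAdjoint.star_eq,
      ← Matrix.mul_assoc, Matrix.mul_assoc B (1 - P), hQ.isIdempotentElem.eq]
    simp only [Matrix.mul_sub, Matrix.sub_mul, Matrix.mul_one, Matrix.mul_assoc]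
  have h0 :=
    (RCLike.nonneg_iff.mp (posSemidef_self_mul_conjTranspose (B * (1 - P))).trace_nonneg).1
  rw [← h, trace_sub, map_sub] at h0
  linarith

end Matrix

variable {n : ℕ}

lemma msqrt_eq_cfc {A : Matrix (Fin n) (Fin n) ℂ} (hA : A.PosSemidef) :
    msqrt A = hA.1.cfc Real.sqrt := by
  rw [msqrt, dif_pos hA, IsHermitian.cfc, Unitary.conjStarAlgAut_apply]
  rfl

lemma isHermitian_msqrt {A : Matrix (Fin n) (Fin n) ℂ} (hA : A.PosSemidef) :
    (msqrt A)ᴴ = msqrt A := by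
  rw [msqrt_eq_cfc hA, hA.1.conjTranspose_cfc]

lemma msqrt_mul_self {A : Matrix (Fin n) (Fin n) ℂ} (hA : A.PosSemidef) :
    msqrt A * msqrt A = A := by
  rw [msqrt_eq_cfc hA, hA.1.cfc_mul_cfc]
  conv_rhs => rw [← hA.1.cfc_id]
  exact hA.1.cfc_congr fun i => Real.mul_self_sqrt (hA.eigenvalues_nonneg i)

lemma exists_isStarProjection_conjTranspose_mul_eq_msqrt (A : Matrix (Fin n) (Fin n) ℂ) :
    ∃ K, IsStarProjection (K * Kᴴ) ∧ Kᴴ * A = msqrt (Aᴴ * A) := by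
  have hM := posSemidef_conjTranspose_mul_self A
  -- `G` is the pseudo-inverse of `√(Aᴴ A)`, thanks to the junk value `(√0)⁻¹ = 0`.
  set G := hM.1.cfc fun x => (√x)⁻¹
  have hG : Gᴴ = G := hM.1.conjTranspose_cfc _
  have hGM : G * (Aᴴ * A) = msqrt (Aᴴ * A) := by
    conv_lhs => rw [← hM.1.cfc_id]
    rw [hM.1.cfc_mul_cfc, msqrt_eq_cfc hM]
    simp only [id, inv_mul_eq_div, Real.div_sqrt]
  have hKK : (A * G)ᴴ * (A * G) = msqrt (Aᴴ * A) * G := by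
    rw [conjTranspose_mul, hG, mul_assoc, ← mul_assoc Aᴴ, ← mul_assoc G, hGM]
  have hK : A * G * (msqrt (Aᴴ * A) * G) = A * G := by
    rw [msqrt_eq_cfc hM, mul_assoc A, hM.1.cfc_mul_cfc, hM.1.cfc_mul_cfc]
    congr 2
    funext x
    rcases eq_or_ne (√x) 0 with h | h <;> field_simp [h]
  refine ⟨A * G, ⟨?_, IsSelfAdjoint.mul_star_self _⟩, ?_⟩
  · rw [IsIdempotentElem, mul_assoc, ← mul_assoc (A * G)ᴴ, hKK, ← mul_assoc, hK]
  · rw [conjTranspose_mul, hG, mul_assoc, hGM]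

lemma re_trace_msqrt_conjTranspose_mul_self_le (B C : Matrix (Fin n) (Fin n) ℂ) :
    (msqrt ((Bᴴ * C)ᴴ * (Bᴴ * C))).trace.re ≤ √(Bᴴ * B).trace.re * √(Cᴴ * C).trace.re := by
  obtain ⟨K, hK, hKA⟩ := exists_isStarProjection_conjTranspose_mul_eq_msqrt (Bᴴ * C)
  have hBK : ((B * K)ᴴ * (B * K)).trace.re ≤ (Bᴴ * B).trace.re := by
    rw [trace_mul_comm, trace_mul_comm Bᴴ, conjTranspose_mul, ← mul_assoc, mul_assoc B]
    exact re_trace_mul_mul_conjTranspose_le B hK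
  calc (msqrt ((Bᴴ * C)ᴴ * (Bᴴ * C))).trace.re = ((B * K)ᴴ * C).trace.re := by
        rw [← hKA, conjTranspose_mul, mul_assoc]
    _ ≤ √((B * K)ᴴ * (B * K)).trace.re * √(Cᴴ * C).trace.re :=
      re_trace_conjTranspose_mul_le (B * K) C
    _ ≤ √(Bᴴ * B).trace.re * √(Cᴴ * C).trace.re := by gcongr

section PosSemidef

variable {E ρ : Matrix (Fin n) (Fin n) ℂ} (hE : E.PosSemidef) (hρ : ρ.PosSemidef)
include hE hρ

lemma trace_conjTranspose_msqrt_mul_msqrt :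
    ((msqrt E * msqrt ρ)ᴴ * (msqrt E * msqrt ρ)).trace = (E * ρ).trace := by
  rw [conjTranspose_mul, isHermitian_msqrt hE, isHermitian_msqrt hρ, mul_assoc,
    ← mul_assoc (msqrt E), msqrt_mul_self hE, trace_mul_comm, mul_assoc, msqrt_mul_self hρ]

lemma re_trace_mul_nonneg : 0 ≤ (E * ρ).trace.re := by
  rw [← trace_conjTranspose_msqrt_mul_msqrt hE hρ]
  exact (Complex.nonneg_iff.mp (posSemidef_conjTranspose_mul_self _).trace_nonneg).1

lemma msqrt_mul_msqrt_eq_zero (h : (E * ρ).trace = 0) : msqrt E * msqrt ρ = 0 := by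
  rwa [← trace_conjTranspose_msqrt_mul_msqrt hE hρ, trace_conjTranspose_mul_self_eq_zero_iff] at h

end PosSemidef

lemma msqrt_mul_msqrt_eq_of_usd {ρ0 ρ1 E0 E1 Eq : Matrix (Fin n) (Fin n) ℂ}
    (hρ0 : ρ0.PosSemidef) (hρ1 : ρ1.PosSemidef)
    (hE0 : E0.PosSemidef) (hE1 : E1.PosSemidef) (hEq : Eq.PosSemidef)
    (hsum : E0 + E1 + Eq = 1)
    (husd0 : (E0 * ρ1).trace = 0) (husd1 : (E1 * ρ0).trace = 0) :
    msqrt ρ1 * msqrt ρ0 = (msqrt Eq * msqrt ρ1)ᴴ * (msqrt Eq * msqrt ρ0) := by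
  have h0 : msqrt ρ1 * E0 = 0 := by
    rw [← msqrt_mul_self hE0, ← mul_assoc, ← isHermitian_msqrt hρ1, ← isHermitian_msqrt hE0,
      ← conjTranspose_mul, msqrt_mul_msqrt_eq_zero hE0 hρ1 husd0, conjTranspose_zero, zero_mul]
  have h1 : E1 * msqrt ρ0 = 0 := by
    rw [← msqrt_mul_self hE1, mul_assoc, msqrt_mul_msqrt_eq_zero hE1 hρ0 husd1, mul_zero]
  calc msqrt ρ1 * msqrt ρ0 = msqrt ρ1 * (E0 + E1 + Eq) * msqrt ρ0 := by rw [hsum, mul_one]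
    _ = msqrt ρ1 * Eq * msqrt ρ0 := by
      rw [mul_add, mul_add, add_mul, add_mul, h0, mul_assoc _ E1, h1]
      simp only [zero_mul, mul_zero, zero_add]
    _ = (msqrt Eq * msqrt ρ1)ᴴ * (msqrt Eq * msqrt ρ0) := by
      rw [conjTranspose_mul, isHermitian_msqrt hEq, isHermitian_msqrt hρ1,
        ← mul_assoc (msqrt ρ1 * msqrt Eq), mul_assoc (msqrt ρ1) (msqrt Eq), msqrt_mul_self hEq]

theorem failure_bound_second_regime_general {n : ℕ}
    (ρ0 ρ1 E0 E1 Eq : Matrix (Fin n) (Fin n) ℂ)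
    (hρ0 : ρ0.PosSemidef)
    (hρ1 : ρ1.PosSemidef)
    (η0 η1 : ℝ) (hη0 : 0 < η0) (hη1 : 0 < η1)
    (hE0 : E0.PosSemidef) (hE1 : E1.PosSemidef) (hEq : Eq.PosSemidef)
    (hsum : E0 + E1 + Eq = 1)
    (husd0 : (E0 * ρ1).trace = 0) (husd1 : (E1 * ρ0).trace = 0) :
    2 * Real.sqrt (η0 * η1) * (msqrt (msqrt ρ0 * ρ1 * msqrt ρ0)).trace.re ≤
      η0 * (Eq * ρ0).trace.re + η1 * (Eq * ρ1).trace.re := by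
  set x := (Eq * ρ0).trace.re
  set y := (Eq * ρ1).trace.re
  have hx : 0 ≤ x := re_trace_mul_nonneg hEq hρ0
  have hy : 0 ≤ y := re_trace_mul_nonneg hEq hρ1
  have hF : (msqrt (msqrt ρ0 * ρ1 * msqrt ρ0)).trace.re ≤ √y * √x := by
    have hM : msqrt ρ0 * ρ1 * msqrt ρ0 = (msqrt ρ1 * msqrt ρ0)ᴴ * (msqrt ρ1 * msqrt ρ0) := by
      rw [conjTranspose_mul, isHermitian_msqrt hρ0, isHermitian_msqrt hρ1,
        ← mul_assoc (msqrt ρ0 * msqrt ρ1), mul_assoc (msqrt ρ0) (msqrt ρ1), msqrt_mul_self hρ1]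
    have := re_trace_msqrt_conjTranspose_mul_self_le (msqrt Eq * msqrt ρ1) (msqrt Eq * msqrt ρ0)
    rwa [← msqrt_mul_msqrt_eq_of_usd hρ0 hρ1 hE0 hE1 hEq hsum husd0 husd1, ← hM,
      trace_conjTranspose_msqrt_mul_msqrt hEq hρ1,
      trace_conjTranspose_msqrt_mul_msqrt hEq hρ0] at this
  calc 2 * √(η0 * η1) * (msqrt (msqrt ρ0 * ρ1 * msqrt ρ0)).trace.re
      ≤ 2 * √(η0 * η1) * (√y * √x) := by gcongr
    _ = 2 * √(η0 * x) * √(η1 * y) := by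
      rw [Real.sqrt_mul hη0.le, Real.sqrt_mul hη0.le, Real.sqrt_mul hη1.le]
      ring
    _ ≤ √(η0 * x) ^ 2 + √(η1 * y) ^ 2 := two_mul_le_add_sq _ _
    _ = η0 * x + η1 * y := by
      rw [Real.sq_sqrt (by positivity), Real.sq_sqrt (by positivity)]

/-- **Theorem 3, second regime.** If `√η0·Tr(P1 ρ0) ≤ √η1·F` and
`√η1·Tr(P0 ρ1) ≤ √η0·F`, then any USD POVM has failure probability
`Q ≥ 2·√(η0·η1)·F`. -/
theorem failure_bound_second_regime {n : ℕ}
    (ρ0 ρ1 E0 E1 Eq P0 P1 : Matrix (Fin n) (Fin n) ℂ)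
    (hρ0 : ρ0.PosSemidef) (hρ0tr : ρ0.trace = 1)
    (hρ1 : ρ1.PosSemidef) (hρ1tr : ρ1.trace = 1)
    (η0 η1 : ℝ) (hη0 : 0 < η0) (hη1 : 0 < η1) (hη : η0 + η1 = 1)
    (hP0 : IsRangeProj ρ0 P0) (hP1 : IsRangeProj ρ1 P1)
    (hregime1 : Real.sqrt η0 * (P1 * ρ0).trace.re ≤
      Real.sqrt η1 * (msqrt (msqrt ρ0 * ρ1 * msqrt ρ0)).trace.re)
    (hregime2 : Real.sqrt η1 * (P0 * ρ1).trace.re ≤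
      Real.sqrt η0 * (msqrt (msqrt ρ0 * ρ1 * msqrt ρ0)).trace.re)
    (hE0 : E0.PosSemidef) (hE1 : E1.PosSemidef) (hEq : Eq.PosSemidef)
    (hsum : E0 + E1 + Eq = 1)
    (husd0 : (E0 * ρ1).trace = 0) (husd1 : (E1 * ρ0).trace = 0) :
    2 * Real.sqrt (η0 * η1) * (msqrt (msqrt ρ0 * ρ1 * msqrt ρ0)).trace.re ≤
      η0 * (Eq * ρ0).trace.re + η1 * (Eq * ρ1).trace.re :=
  failure_bound_second_regime_general ρ0 ρ1 E0 E1 Eq hρ0 hρ1 η0 η1 hη0 hη1 hE0 hE1 hEq hsum husd0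
    husd1
end

section
/- Let ρ0 and ρ1 be n×n complex density matrices with a priori probabilities η0, η1 ≥ 0, η0 + η1 = 1, and let (E0, E1, E?) be a USD POVM for (ρ0, ρ1). Then Q0 = η0·Tr(E? ρ0) ≥ η0·Tr(P1 ρ0) and Q1 = η1·Tr(E? ρ1) ≥ η1·Tr(P0 ρ1), where P0 and P1 are the orthogonal projections onto the ranges of ρ0 and ρ1. -/
open Matrix
open scoped ComplexOrder

/-!
For positive semidefinite `A`, `B`, `Tr(AB) = 0` forces `AB = 0`. So the unambiguity condition
`Tr(E0 ρ1) = 0` gives `E0 ρ1 = 0`, hence `E0 P1 = 0`. Compressing `1 - E0 = E1 + E? ≥ 0` by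
`1 - P1` then gives `1 - P1 - E0 ≥ 0`, and pairing with `ρ0` (using `Tr(E1 ρ0) = 0`) yields
`Tr(P1 ρ0) ≤ Tr(E? ρ0)`. The other bound is symmetric.
-/

namespace Matrix

variable {ι 𝕜 : Type*} [Fintype ι] [RCLike 𝕜]

open scoped MatrixOrder in
theorem PosSemidef.exists_eq_conjTranspose_mul_self {A : Matrix ι ι 𝕜} (hA : A.PosSemidef) :
    ∃ B : Matrix ι ι 𝕜, A = Bᴴ * B := by
  classical
  exact CStarAlgebra.nonneg_iff_eq_star_mul_self.mp hA.nonneg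

theorem PosSemidef.trace_mul_nonneg {A B : Matrix ι ι 𝕜} (hA : A.PosSemidef)
    (hB : B.PosSemidef) : 0 ≤ (A * B).trace := by
  obtain ⟨X, rfl⟩ := hA.exists_eq_conjTranspose_mul_self
  rw [Matrix.mul_assoc, trace_mul_comm]
  exact (hB.mul_mul_conjTranspose_same X).trace_nonneg

theorem PosSemidef.trace_mul_eq_zero_iff {A B : Matrix ι ι 𝕜} (hA : A.PosSemidef)
    (hB : B.PosSemidef) : (A * B).trace = 0 ↔ A * B = 0 := by
  refine ⟨fun h ↦ ?_, fun h ↦ h ▸ trace_zero ι 𝕜⟩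
  obtain ⟨X, rfl⟩ := hA.exists_eq_conjTranspose_mul_self
  obtain ⟨Y, rfl⟩ := hB.exists_eq_conjTranspose_mul_self
  have hXY : X * Yᴴ = 0 := by
    rw [← trace_conjTranspose_mul_self_eq_zero_iff, ← h, conjTranspose_mul,
      conjTranspose_conjTranspose, Matrix.mul_assoc, trace_mul_comm, Matrix.mul_assoc,
      Matrix.mul_assoc, ← Matrix.mul_assoc]
  rw [Matrix.mul_assoc, ← Matrix.mul_assoc X, hXY, Matrix.zero_mul, Matrix.mul_zero]

theorem mul_eq_zero_of_range_le {R : Type*} [CommRing R] {A B C : Matrix ι ι R}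
    (hBC : LinearMap.range B.mulVecLin ≤ LinearMap.range C.mulVecLin) (hAC : A * C = 0) :
    A * B = 0 := by
  have hCA : LinearMap.range C.mulVecLin ≤ LinearMap.ker A.mulVecLin := by
    rw [LinearMap.range_le_ker_iff, ← mulVecLin_mul, hAC, mulVecLin_zero]
  have hBA := LinearMap.range_le_ker_iff.mp (hBC.trans hCA)
  rw [← mulVecLin_mul, ← mulVecLin_zero] at hBA
  exact mulVec_injective (congrArg DFunLike.coe hBA)

theorem PosSemidef.one_sub_sub_of_mul_eq_zero [DecidableEq ι] {E P : Matrix ι ι 𝕜}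
    (hE : (1 - E).PosSemidef) (hP : P.IsHermitian) (hPP : P * P = P) (hEP : E * P = 0) :
    (1 - P - E).PosSemidef := by
  have hEh : E.IsHermitian := by simpa using isHermitian_one.sub hE.isHermitian
  have hPE : P * E = 0 := by
    rw [← hP.eq, ← hEh.eq, ← conjTranspose_mul, hEP, conjTranspose_zero]
  have hconj : (1 - P)ᴴ * (1 - E) * (1 - P) = 1 - P - E := by
    simp only [conjTranspose_sub, conjTranspose_one, hP.eq, Matrix.mul_sub, Matrix.sub_mul,
      Matrix.one_mul, Matrix.mul_one, hPP, hEP, hPE, Matrix.zero_mul]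
    abel
  exact hconj ▸ hE.conjTranspose_mul_mul_same (1 - P)

theorem trace_proj_mul_le_trace_failure_mul [DecidableEq ι] {ρ σ E F G P : Matrix ι ι 𝕜}
    (hρ : ρ.PosSemidef) (hσ : σ.PosSemidef) (hP : P.IsHermitian) (hPP : P * P = P)
    (hPσ : LinearMap.range P.mulVecLin ≤ LinearMap.range σ.mulVecLin)
    (hE : E.PosSemidef) (hF : F.PosSemidef) (hG : G.PosSemidef) (hsum : E + F + G = 1)
    (hEσ : (E * σ).trace = 0) (hFρ : (F * ρ).trace = 0) :
    (P * ρ).trace ≤ (G * ρ).trace := by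
  have hEP : E * P = 0 := mul_eq_zero_of_range_le hPσ ((hE.trace_mul_eq_zero_iff hσ).mp hEσ)
  have hFG : (1 - E).PosSemidef := by
    rw [← hsum, add_assoc, add_sub_cancel_left]
    exact hF.add hG
  rw [← sub_nonneg]
  calc 0 ≤ ((1 - P - E) * ρ).trace :=
        (hFG.one_sub_sub_of_mul_eq_zero hP hPP hEP).trace_mul_nonneg hρ
    _ = ((1 - P - E) * ρ).trace - (F * ρ).trace := by rw [hFρ, sub_zero]
    _ = (G * ρ).trace - (P * ρ).trace := by
        rw [← hsum, ← trace_sub, ← trace_sub, ← Matrix.sub_mul, ← Matrix.sub_mul]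
        congr 2
        abel

end Matrix

theorem partial_failure_lower_bounds_general {n : ℕ}
    (ρ0 ρ1 E0 E1 Eq P0 P1 : Matrix (Fin n) (Fin n) ℂ)
    (hρ0 : ρ0.PosSemidef) (hρ1 : ρ1.PosSemidef)
    (η0 η1 : ℝ) (hη0 : 0 ≤ η0) (hη1 : 0 ≤ η1)
    (hP0 : IsRangeProj ρ0 P0) (hP1 : IsRangeProj ρ1 P1)
    (hE0 : E0.PosSemidef) (hE1 : E1.PosSemidef) (hEq : Eq.PosSemidef)
    (hsum : E0 + E1 + Eq = 1)
    (husd0 : (E0 * ρ1).trace = 0) (husd1 : (E1 * ρ0).trace = 0) :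
    η0 * (P1 * ρ0).trace.re ≤ η0 * (Eq * ρ0).trace.re ∧
      η1 * (P0 * ρ1).trace.re ≤ η1 * (Eq * ρ1).trace.re := by
  have h0 : (P1 * ρ0).trace ≤ (Eq * ρ0).trace :=
    trace_proj_mul_le_trace_failure_mul hρ0 hρ1 hP1.1 hP1.2.1 hP1.2.2.le hE0 hE1 hEq hsum
      husd0 husd1
  have h1 : (P0 * ρ1).trace ≤ (Eq * ρ1).trace :=
    trace_proj_mul_le_trace_failure_mul hρ1 hρ0 hP0.1 hP0.2.1 hP0.2.2.le hE1 hE0 hEq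
      (by rwa [add_comm E1]) husd1 husd0
  exact ⟨mul_le_mul_of_nonneg_left (Complex.re_le_re h0) hη0,
    mul_le_mul_of_nonneg_left (Complex.re_le_re h1) hη1⟩

/-- For any USD POVM, `Q0 ≥ η0·Tr(P1 ρ0)` and `Q1 ≥ η1·Tr(P0 ρ1)`. -/
theorem partial_failure_lower_bounds {n : ℕ}
    (ρ0 ρ1 E0 E1 Eq P0 P1 : Matrix (Fin n) (Fin n) ℂ)
    (hρ0 : ρ0.PosSemidef) (hρ0tr : ρ0.trace = 1)
    (hρ1 : ρ1.PosSemidef) (hρ1tr : ρ1.trace = 1)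
    (η0 η1 : ℝ) (hη0 : 0 ≤ η0) (hη1 : 0 ≤ η1) (hη : η0 + η1 = 1)
    (hP0 : IsRangeProj ρ0 P0) (hP1 : IsRangeProj ρ1 P1)
    (hE0 : E0.PosSemidef) (hE1 : E1.PosSemidef) (hEq : Eq.PosSemidef)
    (hsum : E0 + E1 + Eq = 1)
    (husd0 : (E0 * ρ1).trace = 0) (husd1 : (E1 * ρ0).trace = 0) :
    η0 * (P1 * ρ0).trace.re ≤ η0 * (Eq * ρ0).trace.re ∧
      η1 * (P0 * ρ1).trace.re ≤ η1 * (Eq * ρ1).trace.re :=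
  partial_failure_lower_bounds_general ρ0 ρ1 E0 E1 Eq P0 P1 hρ0 hρ1 η0 η1 hη0 hη1 hP0 hP1 hE0 hE1
    hEq hsum husd0 husd1
end

section
/- Let ρ0 and ρ1 be n×n complex positive semidefinite matrices such that rank(ρ0) + rank(ρ1) = rank(ρ0 + ρ1) = n, and set Σ = ρ0 + ρ1 (which is then invertible). Then ρ0 · Σ⁻¹ · ρ1 = 0. -/
open Matrix
open scoped ComplexOrder

/-!
If `rank A + rank B = rank (A + B)`, then `range (A + B) ≤ range A ⊔ range B` forces the column
spaces of `A` and `B` to be independent. Writing `S = A + B`, the product `A S⁻¹ B` visibly has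
columns in `range A`, and `A S⁻¹ B = (S - B) S⁻¹ B = B (1 - S⁻¹ B)` has columns in `range B`;
hence it vanishes.
-/

namespace Matrix

variable {m n K : Type*} [Fintype n]

theorem range_mulVecLin_mul_le [CommRing K] {o : Type*} [Fintype o]
    (A : Matrix m n K) (C : Matrix n o K) :
    LinearMap.range (A * C).mulVecLin ≤ LinearMap.range A.mulVecLin := by
  rw [mulVecLin_mul]
  exact LinearMap.range_comp_le_range _ _

theorem eq_zero_of_range_mulVecLin_eq_bot [CommRing K] [DecidableEq n] {A : Matrix m n K}
    (h : LinearMap.range A.mulVecLin = ⊥) : A = 0 := by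
  rw [LinearMap.range_eq_bot, ← toLin'_apply'] at h
  exact toLin'.injective (h.trans (map_zero _).symm)

theorem disjoint_range_mulVecLin_of_rank_add_eq [Field K] [Finite m] {A B : Matrix m n K}
    (h : A.rank + B.rank = (A + B).rank) :
    Disjoint (LinearMap.range A.mulVecLin) (LinearMap.range B.mulVecLin) := by
  have hle : (A + B).rank ≤
      Module.finrank K ↥(LinearMap.range A.mulVecLin ⊔ LinearMap.range B.mulVecLin) := by
    rw [rank, mulVecLin_add]
    exact Submodule.finrank_mono (LinearMap.range_add_le _ _)
  have hdim := Submodule.finrank_sup_add_finrank_inf_eq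
    (LinearMap.range A.mulVecLin) (LinearMap.range B.mulVecLin)
  rw [disjoint_iff, ← Submodule.finrank_eq_zero]
  unfold rank at h hle
  omega

theorem isUnit_of_rank_eq_card [Field K] [DecidableEq n] {A : Matrix n n K}
    (h : A.rank = Fintype.card n) : IsUnit A := by
  refine mulVec_surjective_iff_isUnit.mp ((LinearMap.range_eq_top (f := A.mulVecLin)).mp ?_)
  exact Submodule.eq_top_of_finrank_eq (by rw [Module.finrank_fintype_fun_eq_card]; exact h)

theorem mul_nonsing_inv_add_mul_eq_zero [CommRing K] [DecidableEq n] {A B : Matrix n n K}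
    (hAB : Disjoint (LinearMap.range A.mulVecLin) (LinearMap.range B.mulVecLin))
    (hS : IsUnit (A + B).det) : A * (A + B)⁻¹ * B = 0 := by
  have hB : A * (A + B)⁻¹ * B = B * (1 - (A + B)⁻¹ * B) := by
    calc A * (A + B)⁻¹ * B = ((A + B) - B) * (A + B)⁻¹ * B := by rw [add_sub_cancel_right]
      _ = (A + B) * (A + B)⁻¹ * B - B * ((A + B)⁻¹ * B) := by
        rw [sub_mul, sub_mul, Matrix.mul_assoc B]
      _ = B * (1 - (A + B)⁻¹ * B) := by rw [mul_nonsing_inv _ hS, Matrix.one_mul, mul_sub, mul_one]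
  apply eq_zero_of_range_mulVecLin_eq_bot
  rw [← le_bot_iff, ← hAB.eq_bot]
  refine le_inf ?_ ?_
  · rw [Matrix.mul_assoc]
    exact range_mulVecLin_mul_le _ _
  · rw [hB]
    exact range_mulVecLin_mul_le _ _

end Matrix

theorem parallel_addition_eq_zero_general {n : ℕ}
    (ρ0 ρ1 : Matrix (Fin n) (Fin n) ℂ)
    (hrank : ρ0.rank + ρ1.rank = (ρ0 + ρ1).rank)
    (hfull : (ρ0 + ρ1).rank = n) :
    ρ0 * (ρ0 + ρ1)⁻¹ * ρ1 = 0 := by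
  have hunit : IsUnit (ρ0 + ρ1) := isUnit_of_rank_eq_card (by rw [hfull, Fintype.card_fin])
  exact mul_nonsing_inv_add_mul_eq_zero (disjoint_range_mulVecLin_of_rank_add_eq hrank)
    ((isUnit_iff_isUnit_det _).mp hunit)

/-- **Corollary 1.** If `rank ρ0 + rank ρ1 = rank (ρ0 + ρ1) = n`, then
`ρ0 · Σ⁻¹ · ρ1 = 0` where `Σ = ρ0 + ρ1`. -/
theorem parallel_addition_eq_zero {n : ℕ}
    (ρ0 ρ1 : Matrix (Fin n) (Fin n) ℂ)
    (hρ0 : ρ0.PosSemidef) (hρ1 : ρ1.PosSemidef)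
    (hrank : ρ0.rank + ρ1.rank = (ρ0 + ρ1).rank)
    (hfull : (ρ0 + ρ1).rank = n) :
    ρ0 * (ρ0 + ρ1)⁻¹ * ρ1 = 0 :=
  parallel_addition_eq_zero_general ρ0 ρ1 hrank hfull
end
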